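/- Let A(t,T) = (2κθ/σ²) · the logarithm of [2γ e^{(γ+κ)(T-t)/2} / ((γ+κ)(e^{γ(T-t)} - 1) + 2γ)] with γ = √(κ² + 2σ²). Then A satisfies ∂A/∂t = κθ B(t,T), where B(t,T) = 2(e^{γ(T-t)} - 1)/((γ+κ)(e^{γ(T-t)} - 1) + 2γ), and A(T,T) = 0. -/

import Mathlib

/-!
Write `τ = T - t` and `D(τ) = (γ + κ)(e^{γτ} - 1) + 2γ = (γ + κ)e^{γτ} + (γ - κ)`, which is positive
for every `τ` because `|κ| < γ`. Splitting the logarithm, `A` is `2κθ/σ²` times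
`(γ + κ)τ/2 + log 2γ - log D(τ)`, whose `τ`-derivative simplifies to `(κ² - γ²)(e^{γτ} - 1)/(2D(τ))`.
Since `γ² - κ² = 2σ²`, the chain rule through `τ = T - t` turns this into `κθ B(t, T)`.
-/

open Real

noncomputable section

def cirDenom (γ κ τ : ℝ) : ℝ := (γ + κ) * (exp (γ * τ) - 1) + 2 * γ

def cirLogRatio (γ κ τ : ℝ) : ℝ := log (2 * γ * exp ((γ + κ) * τ / 2) / cirDenom γ κ τ)

end

theorem abs_lt_sqrt_sq_add_two_mul_sq {σ : ℝ} (hσ : σ ≠ 0) (κ : ℝ) :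
    |κ| < √(κ ^ 2 + 2 * σ ^ 2) := by
  rw [Real.lt_sqrt (abs_nonneg κ), sq_abs]
  have : 0 < σ ^ 2 := by positivity
  linarith

section CIR

variable {γ κ : ℝ}

theorem cirDenom_pos (h : |κ| < γ) (τ : ℝ) : 0 < cirDenom γ κ τ := by
  have hplus : 0 < γ + κ := by linarith [neg_abs_le κ]
  have hminus : 0 < γ - κ := by linarith [le_abs_self κ]
  have : cirDenom γ κ τ = (γ + κ) * exp (γ * τ) + (γ - κ) := by unfold cirDenom; ring
  rw [this]
  positivity

theorem hasDerivAt_cirDenom (τ : ℝ) :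
    HasDerivAt (cirDenom γ κ) ((γ + κ) * (exp (γ * τ) * γ)) τ := by
  have hexp := ((hasDerivAt_id τ).const_mul γ).exp
  simp only [id, mul_one] at hexp
  exact ((hexp.sub_const 1).const_mul (γ + κ)).add_const (2 * γ)

theorem cirLogRatio_eq (h : |κ| < γ) (τ : ℝ) :
    cirLogRatio γ κ τ = (γ + κ) * τ / 2 + log (2 * γ) - log (cirDenom γ κ τ) := by
  have hγ : 0 < γ := (abs_nonneg κ).trans_lt h
  rw [cirLogRatio, log_div (by positivity) (cirDenom_pos h τ).ne',
    log_mul (by positivity) (exp_pos _).ne', log_exp]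
  ring

theorem cirLogRatio_zero (h : |κ| < γ) : cirLogRatio γ κ 0 = 0 := by
  have hγ : 0 < γ := (abs_nonneg κ).trans_lt h
  simp [cirLogRatio, cirDenom, hγ.ne']

theorem hasDerivAt_cirLogRatio (h : |κ| < γ) (τ : ℝ) :
    HasDerivAt (cirLogRatio γ κ)
      ((κ ^ 2 - γ ^ 2) * (exp (γ * τ) - 1) / (2 * cirDenom γ κ τ)) τ := by
  have hD := cirDenom_pos h τ
  have hlin : HasDerivAt (fun τ : ℝ => (γ + κ) * τ / 2 + log (2 * γ)) ((γ + κ) / 2) τ := by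
    simpa using (((hasDerivAt_id τ).const_mul (γ + κ)).div_const 2).add_const (log (2 * γ))
  have hsplit := hlin.sub ((hasDerivAt_cirDenom τ).log hD.ne')
  rw [show cirLogRatio γ κ = _ from funext (cirLogRatio_eq h)]
  refine hsplit.congr_deriv ?_
  field_simp
  rw [cirDenom]
  ring

end CIR

theorem A_satisfies_ode_general (κ θ σ T : ℝ) (hσ : 0 < σ)
    (γ : ℝ) (hγ : γ = Real.sqrt (κ ^ 2 + 2 * σ ^ 2))
    (A B : ℝ → ℝ)
    (hA : ∀ t, A t = (2 * κ * θ / σ ^ 2) *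
        Real.log (2 * γ * Real.exp ((γ + κ) * (T - t) / 2) /
          ((γ + κ) * (Real.exp (γ * (T - t)) - 1) + 2 * γ)))
    (hB : ∀ t, B t = 2 * (Real.exp (γ * (T - t)) - 1) /
        ((γ + κ) * (Real.exp (γ * (T - t)) - 1) + 2 * γ)) :
    A T = 0 ∧ ∀ t, t ≤ T → HasDerivAt A (κ * θ * B t) t := by
  have hκγ : |κ| < γ := hγ ▸ abs_lt_sqrt_sq_add_two_mul_sq hσ.ne' κ
  have hγσ : γ ^ 2 = κ ^ 2 + 2 * σ ^ 2 := by rw [hγ, sq_sqrt (by positivity)]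
  have hA' : A = fun t => 2 * κ * θ / σ ^ 2 * cirLogRatio γ κ (T - t) := funext hA
  refine ⟨by simp [hA', cirLogRatio_zero hκγ], fun t _ => ?_⟩
  have hderiv := ((hasDerivAt_cirLogRatio hκγ (T - t)).comp t
    ((hasDerivAt_id t).const_sub T)).const_mul (2 * κ * θ / σ ^ 2)
  rw [hA']
  refine hderiv.congr_deriv ?_
  have hD := cirDenom_pos hκγ (T - t)
  rw [hB t, show (γ + κ) * (exp (γ * (T - t)) - 1) + 2 * γ = cirDenom γ κ (T - t) from rfl]
  field_simp
  rw [hγσ]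
  ring

theorem A_satisfies_ode (κ θ σ T : ℝ) (hκ : 0 < κ) (hθ : 0 < θ) (hσ : 0 < σ)
    (γ : ℝ) (hγ : γ = Real.sqrt (κ ^ 2 + 2 * σ ^ 2))
    (A B : ℝ → ℝ)
    (hA : ∀ t, A t = (2 * κ * θ / σ ^ 2) *
        Real.log (2 * γ * Real.exp ((γ + κ) * (T - t) / 2) /
          ((γ + κ) * (Real.exp (γ * (T - t)) - 1) + 2 * γ)))
    (hB : ∀ t, B t = 2 * (Real.exp (γ * (T - t)) - 1) /
        ((γ + κ) * (Real.exp (γ * (T - t)) - 1) + 2 * γ)) :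
    A T = 0 ∧ ∀ t, t ≤ T → HasDerivAt A (κ * θ * B t) t :=
  A_satisfies_ode_general κ θ σ T hσ γ hγ A B hA hB
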